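/- arXiv:1205.4482 — 3 statements merged into one kernel-verified Lean document; each statement's English description precedes it below -/
import Mathlib

section
/- Let X be a real Banach space, 1 ≤ p < ∞, and A : X ⇉ X* a monotone operator with nonempty graph. Suppose that for every z ∉ cl(dom A) and all sufficiently large λ > 0, the pair (z,0) is not monotonically related to the graph of A + λ J_p(· − z). Then cl(dom A) = cl(conv(dom A)) = cl(P_X[dom F_A]); in particular cl(dom A) is convex. -/
/-! `dom A ⊆ P_X(dom F_A)` by monotonicity, and `dom F_A` is convex because `F_A` is a
supremum of affine functions. Conversely, let `(z, z*) ∈ dom F_A` with `z` at distance `r > 0`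
from `dom A`. A pair `(x, a* + λ b*)` witnessing that `(z, 0)` is not monotonically related to
`A + λ J_p(· − z)` gives
`λ ‖x − z‖^p / p ≤ λ b*(x − z) < a*(z − x) ≤ F_A(z, z*) − z*(z) + ‖z*‖ ‖x − z‖`,
the last step being the Fitzpatrick inequality at `(x, a*)`; since `‖x − z‖ ≥ r` and `p ≥ 1`
this fails for large `λ`. So `P_X(dom F_A)` is a convex set between `dom A` and its closure. -/

open Set

noncomputable section

variable {X : Type*}

/-- The domain of a set-valued operator `A : X ⇉ X*`, identified with its graph. -/
def opDom [NormedAddCommGroup X] [NormedSpace ℝ X]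
    (A : Set (X × (X →L[ℝ] ℝ))) : Set X := Prod.fst '' A

/-- The range of a set-valued operator. -/
def opRan [NormedAddCommGroup X] [NormedSpace ℝ X]
    (A : Set (X × (X →L[ℝ] ℝ))) : Set (X →L[ℝ] ℝ) := Prod.snd '' A

/-- `(x, x*)` is monotonically related to the set `S ⊆ X × X*`:
`⟨x − y, x* − y*⟩ ≥ 0` for all `(y, y*) ∈ S`. -/
def MonRel [NormedAddCommGroup X] [NormedSpace ℝ X]
    (p : X × (X →L[ℝ] ℝ)) (S : Set (X × (X →L[ℝ] ℝ))) : Prop :=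
  ∀ q ∈ S, 0 ≤ (p.2 - q.2) (p.1 - q.1)

/-- `A` is a monotone operator (identified with its graph). -/
def IsMonotoneOp [NormedAddCommGroup X] [NormedSpace ℝ X]
    (A : Set (X × (X →L[ℝ] ℝ))) : Prop :=
  ∀ p ∈ A, MonRel p A

/-- `A` is maximally monotone: it is monotone and every monotonically related
pair already belongs to the graph. -/
def IsMaxMonotoneOp [NormedAddCommGroup X] [NormedSpace ℝ X]
    (A : Set (X × (X →L[ℝ] ℝ))) : Prop :=
  IsMonotoneOp A ∧ ∀ p : X × (X →L[ℝ] ℝ), MonRel p A → p ∈ A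

/-- The Fitzpatrick function of `A`, with values in `(-∞, +∞]` (modeled in `EReal`):
`F_A(x, x*) = sup_{(a,a*) ∈ A} (⟨a, x*⟩ + ⟨x, a*⟩ − ⟨a, a*⟩)`. -/
def fitz [NormedAddCommGroup X] [NormedSpace ℝ X]
    (A : Set (X × (X →L[ℝ] ℝ))) (x : X) (x' : X →L[ℝ] ℝ) : EReal :=
  ⨆ a ∈ A, ((x' a.1 + a.2 x - a.2 a.1 : ℝ) : EReal)

/-- The domain of the Fitzpatrick function: the set of pairs where `F_A < +∞`. -/
def fitzDom [NormedAddCommGroup X] [NormedSpace ℝ X]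
    (A : Set (X × (X →L[ℝ] ℝ))) : Set (X × (X →L[ℝ] ℝ)) :=
  {q | fitz A q.1 q.2 < ⊤}

/-- `J_p(x) = (1/p) ∂‖·‖^p (x)`, the subdifferential at `x` of `y ↦ ‖y‖^p / p`. -/
def Jmap [NormedAddCommGroup X] [NormedSpace ℝ X]
    (p : ℝ) (x : X) : Set (X →L[ℝ] ℝ) :=
  {x' | ∀ y : X, x' (y - x) + ‖x‖ ^ p / p ≤ ‖y‖ ^ p / p}

/-- The graph of the operator `A + λ J_p(· − z)`. -/
def sumGraph [NormedAddCommGroup X] [NormedSpace ℝ X]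
    (A : Set (X × (X →L[ℝ] ℝ))) (lam p : ℝ) (z : X) :
    Set (X × (X →L[ℝ] ℝ)) :=
  {q | ∃ a' b' : X →L[ℝ] ℝ, (q.1, a') ∈ A ∧ b' ∈ Jmap p (q.1 - z) ∧ q.2 = a' + lam • b'}

theorem add_mul_le_mul_rpow_div {p r t K C lam : ℝ} (hp : 1 ≤ p) (hr : 0 < r) (hrt : r ≤ t)
    (hC : 0 ≤ C) (hlam : p * (|K| / r + C) / r ^ (p - 1) ≤ lam) :
    K + C * t ≤ lam * (t ^ p / p) := by
  have hp0 : 0 < p := zero_lt_one.trans_le hp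
  have ht : 0 < t := hr.trans_le hrt
  have hlam0 : 0 ≤ lam := le_trans (by positivity) hlam
  have hcoef : |K| / r + C ≤ lam * r ^ (p - 1) / p := by
    rw [div_le_iff₀ (by positivity)] at hlam
    rw [le_div_iff₀ hp0]
    linarith
  have hK : K ≤ t * (|K| / r) := by
    rw [mul_div_left_comm, ← mul_div_assoc, le_div_iff₀ hr]
    nlinarith [le_abs_self K, abs_nonneg K]
  have hpow : r ^ (p - 1) ≤ t ^ (p - 1) := Real.rpow_le_rpow hr.le hrt (by linarith)
  calc K + C * t ≤ t * (|K| / r + C) := by linarith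
    _ ≤ t * (lam * r ^ (p - 1) / p) := mul_le_mul_of_nonneg_left hcoef ht.le
    _ ≤ t * (lam * t ^ (p - 1) / p) := by gcongr
    _ = lam * (t ^ p / p) := by
      rw [Real.rpow_sub_one ht.ne']
      field_simp

section NearConvexity

variable [NormedAddCommGroup X] [NormedSpace ℝ X]

theorem fitz_lt_top_iff {A : Set (X × (X →L[ℝ] ℝ))} {x : X} {x' : X →L[ℝ] ℝ} :
    fitz A x x' < ⊤ ↔ ∃ M : ℝ, ∀ a ∈ A, x' a.1 + a.2 x - a.2 a.1 ≤ M := by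
  constructor
  · intro hlt
    refine ⟨(fitz A x x').toReal, fun a ha => ?_⟩
    have hle : ((x' a.1 + a.2 x - a.2 a.1 : ℝ) : EReal) ≤ fitz A x x' :=
      le_iSup₂ (f := fun a (_ : a ∈ A) => ((x' a.1 + a.2 x - a.2 a.1 : ℝ) : EReal)) a ha
    exact EReal.coe_le_coe_iff.mp (hle.trans (EReal.le_coe_toReal hlt.ne))
  · rintro ⟨M, hM⟩
    refine lt_of_le_of_lt (iSup₂_le fun a ha => ?_) (EReal.coe_lt_top M)
    exact EReal.coe_le_coe_iff.mpr (hM a ha)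

theorem opDom_subset_fst_image_fitzDom {A : Set (X × (X →L[ℝ] ℝ))} (hmono : IsMonotoneOp A) :
    opDom A ⊆ Prod.fst '' fitzDom A := by
  rintro _ ⟨⟨u, u'⟩, hu, rfl⟩
  refine ⟨(u, u'), fitz_lt_top_iff.mpr ⟨u' u, fun a ha => ?_⟩, rfl⟩
  have hrel := hmono (u, u') hu a ha
  simp only [sub_apply, map_sub] at hrel
  linarith

theorem convex_fitzDom (A : Set (X × (X →L[ℝ] ℝ))) : Convex ℝ (fitzDom A) := by
  intro q₁ hq₁ q₂ hq₂ s t hs ht hst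
  obtain ⟨M₁, hM₁⟩ := fitz_lt_top_iff.mp hq₁
  obtain ⟨M₂, hM₂⟩ := fitz_lt_top_iff.mp hq₂
  refine fitz_lt_top_iff.mpr ⟨s * M₁ + t * M₂, fun a ha => ?_⟩
  have haffine : (s • q₁ + t • q₂).2 a.1 + a.2 (s • q₁ + t • q₂).1 - a.2 a.1
      = s * (q₁.2 a.1 + a.2 q₁.1 - a.2 a.1) + t * (q₂.2 a.1 + a.2 q₂.1 - a.2 a.1) := by
    simp only [Prod.fst_add, Prod.snd_add, Prod.smul_fst, Prod.smul_snd, add_apply, smul_apply,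
      map_add, map_smul, smul_eq_mul]
    linear_combination a.2 a.1 * hst
  rw [haffine]
  exact add_le_add (mul_le_mul_of_nonneg_left (hM₁ a ha) hs)
    (mul_le_mul_of_nonneg_left (hM₂ a ha) ht)

theorem norm_rpow_div_le_of_mem_Jmap {p : ℝ} (hp : 0 < p) {x : X} {x' : X →L[ℝ] ℝ}
    (hx' : x' ∈ Jmap p x) : ‖x‖ ^ p / p ≤ x' x := by
  have h0 := hx' 0
  rw [zero_sub, map_neg, norm_zero, Real.zero_rpow hp.ne', zero_div] at h0
  linarith

theorem exists_of_not_monRel_sumGraph {A : Set (X × (X →L[ℝ] ℝ))} {lam p : ℝ} {z : X}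
    (h : ¬ MonRel (z, (0 : X →L[ℝ] ℝ)) (sumGraph A lam p z)) :
    ∃ x a' b', (x, a') ∈ A ∧ b' ∈ Jmap p (x - z) ∧ lam * b' (x - z) < a' (z - x) := by
  simp only [MonRel, not_forall, not_le] at h
  obtain ⟨q, ⟨a', b', ha, hb, hq⟩, hlt⟩ := h
  refine ⟨q.1, a', b', ha, hb, ?_⟩
  have hflip : b' (z - q.1) = -b' (q.1 - z) := by rw [← map_neg, neg_sub]
  rw [hq] at hlt
  simp only [zero_sub, neg_apply, add_apply, smul_apply, smul_eq_mul, hflip] at hlt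
  linarith

theorem fst_image_fitzDom_subset_closure_opDom {p : ℝ} (hp : 1 ≤ p)
    {A : Set (X × (X →L[ℝ] ℝ))}
    (h : ∀ z ∉ closure (opDom A), ∃ Λ : ℝ, ∀ lam : ℝ, Λ ≤ lam →
      ¬ MonRel (z, (0 : X →L[ℝ] ℝ)) (sumGraph A lam p z)) :
    Prod.fst '' fitzDom A ⊆ closure (opDom A) := by
  rintro _ ⟨⟨z, z'⟩, hfitz, rfl⟩
  by_contra hz
  obtain ⟨Λ, hΛ⟩ := h z hz
  obtain ⟨M, hM⟩ := fitz_lt_top_iff.mp hfitz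
  rw [Metric.mem_closure_iff] at hz
  push Not at hz
  obtain ⟨r, hr, hfar⟩ := hz
  set lam := max Λ (p * (|M - z' z| / r + ‖z'‖) / r ^ (p - 1))
  have hlam0 : 0 ≤ lam := le_trans (by positivity) (le_max_right _ _)
  obtain ⟨x, a', b', ha, hb, hlt⟩ := exists_of_not_monRel_sumGraph (hΛ lam (le_max_left _ _))
  have hdual : z' z - z' x ≤ ‖z'‖ * ‖x - z‖ := by
    rw [← map_sub, norm_sub_rev x z]
    exact (le_abs_self _).trans (z'.le_opNorm _)
  have hdist : r ≤ ‖x - z‖ := by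
    rw [← dist_eq_norm, dist_comm]
    exact hfar x ⟨(x, a'), ha, rfl⟩
  have hfitzx := hM (x, a') ha
  dsimp only at hfitzx
  have key : lam * (‖x - z‖ ^ p / p) < lam * (‖x - z‖ ^ p / p) :=
    calc lam * (‖x - z‖ ^ p / p)
        ≤ lam * b' (x - z) :=
          mul_le_mul_of_nonneg_left (norm_rpow_div_le_of_mem_Jmap (by linarith) hb) hlam0
      _ < a' (z - x) := hlt
      _ ≤ M - z' z + ‖z'‖ * ‖x - z‖ := by rw [map_sub]; linarith
      _ ≤ lam * (‖x - z‖ ^ p / p) :=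
          add_mul_le_mul_rpow_div hp hr hdist (norm_nonneg z') (le_max_right _ _)
  exact lt_irrefl _ key

end NearConvexity

theorem nearly_convex_of_not_monRel_general
    [NormedAddCommGroup X] [NormedSpace ℝ X]
    (p : ℝ) (hp : 1 ≤ p)
    (A : Set (X × (X →L[ℝ] ℝ))) (hmono : IsMonotoneOp A)
    (h : ∀ z ∉ closure (opDom A), ∃ Λ : ℝ, 0 < Λ ∧ ∀ lam : ℝ, Λ ≤ lam →
      ¬ MonRel (z, (0 : X →L[ℝ] ℝ)) (sumGraph A lam p z)) :
    closure (opDom A) = closure (convexHull ℝ (opDom A)) ∧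
    closure (opDom A) = closure (Prod.fst '' fitzDom A) ∧
    Convex ℝ (closure (opDom A)) := by
  have hdom : opDom A ⊆ Prod.fst '' fitzDom A := opDom_subset_fst_image_fitzDom hmono
  have hconv : Convex ℝ (Prod.fst '' fitzDom A) :=
    (convex_fitzDom A).linear_image (LinearMap.fst ℝ X (X →L[ℝ] ℝ))
  have hfitz : Prod.fst '' fitzDom A ⊆ closure (opDom A) :=
    fst_image_fitzDom_subset_closure_opDom hp fun z hz => (h z hz).imp fun _ hΛ => hΛ.2
  have hhull : closure (opDom A) = closure (convexHull ℝ (opDom A)) :=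
    (closure_mono (subset_convexHull ℝ _)).antisymm
      (closure_minimal ((convexHull_min hdom hconv).trans hfitz) isClosed_closure)
  refine ⟨hhull, (closure_mono hdom).antisymm (closure_minimal hfitz isClosed_closure), ?_⟩
  rw [hhull]
  exact (convex_convexHull ℝ _).closure

/-- Proposition (domain near convexity): if `A` is monotone with nonempty graph and,
for every `z ∉ cl(dom A)` and all sufficiently large `λ > 0`, the pair `(z, 0)` is not
monotonically related to `gra (A + λ J_p(· − z))`, then
`cl(dom A) = cl(conv(dom A)) = cl(P_X[dom F_A])`; in particular `cl(dom A)` is convex. -/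
theorem nearly_convex_of_not_monRel
    [NormedAddCommGroup X] [NormedSpace ℝ X] [CompleteSpace X]
    (p : ℝ) (hp : 1 ≤ p)
    (A : Set (X × (X →L[ℝ] ℝ))) (hne : A.Nonempty) (hmono : IsMonotoneOp A)
    (h : ∀ z ∉ closure (opDom A), ∃ Λ : ℝ, 0 < Λ ∧ ∀ lam : ℝ, Λ ≤ lam →
      ¬ MonRel (z, (0 : X →L[ℝ] ℝ)) (sumGraph A lam p z)) :
    closure (opDom A) = closure (convexHull ℝ (opDom A)) ∧
    closure (opDom A) = closure (Prod.fst '' fitzDom A) ∧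
    Convex ℝ (closure (opDom A)) :=
  nearly_convex_of_not_monRel_general p hp A hmono h
end
end

section
/- Let X be a real Banach space and A : X ⇉ X* a maximally monotone operator whose graph is an affine subset of X × X* (in particular, a maximally monotone linear relation). Then cl(dom A) = cl(conv(dom A)) = cl(P_X[dom F_A]); in particular dom A is nearly convex (its closure is convex). -/
open Set

noncomputable section

variable {X : Type*}

/-!
Since `gra A` is affine, so is `dom A`; in particular it is convex. Monotonicity gives
`F_A(x, x*) ≤ ⟨x, x*⟩` on `gra A`, so `dom A ⊆ P_X[dom F_A]`. Conversely, if `x ∈ P_X[dom F_A]`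
lay outside the closed convex set `cl(dom A)`, a separating functional `f` would be bounded above
on the affine set `dom A`, hence constant there. Maximality then puts `(a, a* + s f)` in `gra A`
for every `(a, a*) ∈ gra A` and `s ∈ ℝ`, and these pairs push `F_A(x, x*)` to `+∞` unless
`f x = f a`, contradicting the separation.
-/

def IsAffineSet {E : Type*} [AddCommGroup E] [Module ℝ E] (S : Set E) : Prop :=
  ∀ x ∈ S, ∀ y ∈ S, ∀ t : ℝ, t • x + (1 - t) • y ∈ S

lemma eq_zero_of_forall_mul_add_le {c d M : ℝ} (h : ∀ s : ℝ, s * d + c ≤ M) : d = 0 := by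
  by_contra hd
  have := h ((M - c + 1) / d)
  rw [div_mul_cancel₀ _ hd] at this
  linarith

namespace IsAffineSet

variable {E F : Type*} [AddCommGroup E] [Module ℝ E] [AddCommGroup F] [Module ℝ F] {S : Set E}

lemma convex (hS : IsAffineSet S) : Convex ℝ S := by
  intro x hx y hy a b _ _ hab
  rw [eq_sub_of_add_eq' hab]
  exact hS x hx y hy a

lemma image (hS : IsAffineSet S) (g : E →ₗ[ℝ] F) : IsAffineSet (g '' S) := by
  rintro _ ⟨x, hx, rfl⟩ _ ⟨y, hy, rfl⟩ t
  exact ⟨t • x + (1 - t) • y, hS x hx y hy t, by simp⟩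

lemma apply_eq_of_forall_le (hS : IsAffineSet S) (f : E →ₗ[ℝ] ℝ) {u : ℝ}
    (hf : ∀ z ∈ S, f z ≤ u) {x y : E} (hx : x ∈ S) (hy : y ∈ S) : f x = f y := by
  have hline : ∀ t : ℝ, t * (f x - f y) + f y ≤ u := fun t => by
    have := hf _ (hS x hx y hy t)
    simp only [map_add, map_smul, smul_eq_mul] at this
    linarith
  exact sub_eq_zero.mp (eq_zero_of_forall_mul_add_le hline)

end IsAffineSet

section Fitzpatrick

variable [NormedAddCommGroup X] [NormedSpace ℝ X] {A : Set (X × (X →L[ℝ] ℝ))}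

lemma le_fitz {a : X × (X →L[ℝ] ℝ)} (ha : a ∈ A) (x : X) (x' : X →L[ℝ] ℝ) :
    ((x' a.1 + a.2 x - a.2 a.1 : ℝ) : EReal) ≤ fitz A x x' :=
  le_iSup₂ (f := fun (a : X × (X →L[ℝ] ℝ)) (_ : a ∈ A) =>
    ((x' a.1 + a.2 x - a.2 a.1 : ℝ) : EReal)) a ha

lemma IsMonotoneOp.fitz_le (hA : IsMonotoneOp A) {p : X × (X →L[ℝ] ℝ)} (hp : p ∈ A) :
    fitz A p.1 p.2 ≤ ((p.2 p.1 : ℝ) : EReal) := by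
  refine iSup₂_le fun a ha => EReal.coe_le_coe_iff.mpr ?_
  have := hA p hp a ha
  simp only [sub_apply, map_sub] at this
  linarith

lemma IsMonotoneOp.subset_fitzDom (hA : IsMonotoneOp A) : A ⊆ fitzDom A :=
  fun _ hp => (hA.fitz_le hp).trans_lt (EReal.coe_lt_top _)

lemma IsMaxMonotoneOp.nonempty (hA : IsMaxMonotoneOp A) : A.Nonempty := by
  rcases A.eq_empty_or_nonempty with h | h
  · exact ⟨0, hA.2 0 (by simp [MonRel, h])⟩
  · exact h

lemma IsMaxMonotoneOp.add_mem_of_forall_apply_eq (hA : IsMaxMonotoneOp A)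
    {p : X × (X →L[ℝ] ℝ)} (hp : p ∈ A) {g : X →L[ℝ] ℝ} (hg : ∀ a ∈ A, g a.1 = g p.1) :
    (p.1, p.2 + g) ∈ A := by
  refine hA.2 _ fun a ha => ?_
  have hmon := hA.1 p hp a ha
  have hg0 : g (p.1 - a.1) = 0 := by rw [map_sub, hg a ha, sub_self]
  simp only [sub_apply, add_apply] at hmon ⊢
  linarith

lemma IsMaxMonotoneOp.apply_fst_eq_of_mem_fitzDom (hA : IsMaxMonotoneOp A)
    {p : X × (X →L[ℝ] ℝ)} (hp : p ∈ A) {f : X →L[ℝ] ℝ} (hf : ∀ a ∈ A, f a.1 = f p.1)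
    {q : X × (X →L[ℝ] ℝ)} (hq : q ∈ fitzDom A) : f q.1 = f p.1 := by
  obtain ⟨M, hM, -⟩ := EReal.lt_iff_exists_real_btwn.mp hq
  have hbound : ∀ s : ℝ, s * (f q.1 - f p.1) + (q.2 p.1 + p.2 q.1 - p.2 p.1) ≤ M := by
    intro s
    have hmem := hA.add_mem_of_forall_apply_eq hp (g := s • f) fun a ha => by simp [hf a ha]
    have := EReal.coe_le_coe_iff.mp ((le_fitz hmem q.1 q.2).trans hM.le)
    simp only [add_apply, smul_apply, smul_eq_mul] at this
    linarith
  exact sub_eq_zero.mp (eq_zero_of_forall_mul_add_le hbound)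

lemma fst_fitzDom_subset_closure_opDom (hA : IsMaxMonotoneOp A) (haff : IsAffineSet A) :
    Prod.fst '' fitzDom A ⊆ closure (opDom A) := by
  rintro x ⟨q, hq, rfl⟩
  by_contra hx
  have hdom : IsAffineSet (opDom A) := haff.image (LinearMap.fst ℝ _ _)
  obtain ⟨f, u, hfu, hux⟩ :=
    geometric_hahn_banach_closed_point hdom.convex.closure isClosed_closure hx
  obtain ⟨p, hp⟩ := hA.nonempty
  have hpu := hfu p.1 (subset_closure ⟨p, hp, rfl⟩)
  have hconst : ∀ a ∈ A, f a.1 = f p.1 := fun a ha =>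
    hdom.apply_eq_of_forall_le f.toLinearMap (fun z hz => (hfu z (subset_closure hz)).le)
      ⟨a, ha, rfl⟩ ⟨p, hp, rfl⟩
  have := hA.apply_fst_eq_of_mem_fitzDom hp hconst hq
  linarith

end Fitzpatrick

theorem nearly_convex_of_affine_graph_general
    [NormedAddCommGroup X] [NormedSpace ℝ X]
    (A : Set (X × (X →L[ℝ] ℝ))) (hA : IsMaxMonotoneOp A)
    (haff : ∀ q ∈ A, ∀ r ∈ A, ∀ t : ℝ, t • q + (1 - t) • r ∈ A) :
    closure (opDom A) = closure (convexHull ℝ (opDom A)) ∧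
    closure (opDom A) = closure (Prod.fst '' fitzDom A) ∧
    Convex ℝ (closure (opDom A)) := by
  have hconv : Convex ℝ (opDom A) := (IsAffineSet.image haff (LinearMap.fst ℝ _ _)).convex
  have hfitz : closure (opDom A) = closure (Prod.fst '' fitzDom A) :=
    (closure_mono (image_mono hA.1.subset_fitzDom)).antisymm
      (closure_minimal (fst_fitzDom_subset_closure_opDom hA haff) isClosed_closure)
  exact ⟨by rw [hconv.convexHull_eq], hfitz, hconv.closure⟩

/-- Corollary: if `A` is maximally monotone with affine graph, then
`cl(dom A) = cl(conv(dom A)) = cl(P_X[dom F_A])`; in particular `dom A` is nearly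
convex. -/
theorem nearly_convex_of_affine_graph
    [NormedAddCommGroup X] [NormedSpace ℝ X] [CompleteSpace X]
    (A : Set (X × (X →L[ℝ] ℝ))) (hA : IsMaxMonotoneOp A)
    (haff : ∀ q ∈ A, ∀ r ∈ A, ∀ t : ℝ, t • q + (1 - t) • r ∈ A) :
    closure (opDom A) = closure (convexHull ℝ (opDom A)) ∧
    closure (opDom A) = closure (Prod.fst '' fitzDom A) ∧
    Convex ℝ (closure (opDom A)) :=
  nearly_convex_of_affine_graph_general A hA haff
end
end

section
/- Let X be a real Banach space and A : X ⇉ X* a maximally monotone operator. If z ∈ X satisfies z ∉ cl(conv(dom A)), then F_A(z,z*) = +∞ for every z* ∈ X*; that is, no point of dom F_A projects to z. -/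
open Set

noncomputable section

variable {X : Type*}

/-! Strictly separate `z` from `cl(conv(dom A))` by a functional `f`, with margin `β > 0`.
If `F_A(z, z*) ≤ M` were finite, then for `t ≥ 0` with `t β ≥ M - z*(z)` every `(a, a*) ∈ A`
satisfies `⟨z - a, z* + t f - a*⟩ ≥ z*(z) - M + t β ≥ 0`, so by maximality `(z, z* + t f) ∈ A`,
which puts `z` into `dom A`. -/

section

variable [NormedAddCommGroup X] [NormedSpace ℝ X]

theorem fitz_le_coe_iff (A : Set (X × (X →L[ℝ] ℝ))) (x : X) (x' : X →L[ℝ] ℝ) (M : ℝ) :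
    fitz A x x' ≤ M ↔ ∀ a ∈ A, x' a.1 + a.2 x - a.2 a.1 ≤ M := by
  simp only [fitz, iSup₂_le_iff, EReal.coe_le_coe_iff]

theorem exists_forall_le_of_fitz_ne_top {A : Set (X × (X →L[ℝ] ℝ))} {x : X}
    {x' : X →L[ℝ] ℝ} (h : fitz A x x' ≠ ⊤) :
    ∃ M : ℝ, ∀ a ∈ A, x' a.1 + a.2 x - a.2 a.1 ≤ M := by
  obtain ⟨M, hM, -⟩ := EReal.lt_iff_exists_real_btwn.mp (lt_top_iff_ne_top.mpr h)
  exact ⟨M, (fitz_le_coe_iff A x x' M).mp hM.le⟩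

theorem monRel_add_smul_of_forall_le {A : Set (X × (X →L[ℝ] ℝ))} {x : X}
    {x' f : X →L[ℝ] ℝ} {M β t : ℝ} (hM : ∀ a ∈ A, x' a.1 + a.2 x - a.2 a.1 ≤ M)
    (hf : ∀ a ∈ A, β ≤ f (x - a.1)) (ht : 0 ≤ t) (htβ : M - x' x ≤ t * β) :
    MonRel (x, x' + t • f) A := by
  intro a ha
  have hfa : t * β ≤ t * f (x - a.1) := mul_le_mul_of_nonneg_left (hf a ha) ht
  have hMa := hM a ha
  simp only [sub_apply, add_apply, smul_apply, smul_eq_mul, map_sub] at hfa ⊢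
  linarith

theorem fitz_eq_top_of_forall_le_apply_sub {A : Set (X × (X →L[ℝ] ℝ))}
    (hmax : ∀ p : X × (X →L[ℝ] ℝ), MonRel p A → p ∈ A) {z : X} {f : X →L[ℝ] ℝ} {β : ℝ}
    (hβ : 0 < β) (hf : ∀ a ∈ A, β ≤ f (z - a.1)) (z' : X →L[ℝ] ℝ) : fitz A z z' = ⊤ := by
  by_contra hfin
  obtain ⟨M, hM⟩ := exists_forall_le_of_fitz_ne_top hfin
  have htβ : M - z' z ≤ |M - z' z| / β * β := by
    rw [div_mul_cancel₀ _ hβ.ne']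
    exact le_abs_self _
  have hz := hf _ (hmax _ (monRel_add_smul_of_forall_le hM hf (by positivity) htβ))
  simp only [sub_self, map_zero] at hz
  linarith

end

theorem fitz_eq_top_of_not_mem_closure_convexHull_general
    [NormedAddCommGroup X] [NormedSpace ℝ X]
    (A : Set (X × (X →L[ℝ] ℝ))) (hA : IsMaxMonotoneOp A) (z : X)
    (hz : z ∉ closure (convexHull ℝ (opDom A))) :
    (∀ z' : X →L[ℝ] ℝ, fitz A z z' = ⊤) ∧ z ∉ Prod.fst '' fitzDom A := by
  obtain ⟨f, u, hfu, huz⟩ := geometric_hahn_banach_closed_point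
    (convex_convexHull ℝ (opDom A)).closure isClosed_closure hz
  have hsep : ∀ a ∈ A, f z - u ≤ f (z - a.1) := fun a ha => by
    have := hfu a.1 (subset_closure (subset_convexHull ℝ _ ⟨a, ha, rfl⟩))
    rw [map_sub]
    linarith
  have htop := fitz_eq_top_of_forall_le_apply_sub hA.2 (sub_pos.mpr huz) hsep
  refine ⟨htop, ?_⟩
  rintro ⟨q, hq, rfl⟩
  exact (hq : fitz A q.1 q.2 < ⊤).ne (htop q.2)

/-- Theorem: if `A` is maximally monotone and `z ∉ cl(conv(dom A))`, then
`F_A(z, z*) = +∞` for every `z*`; that is, no point of `dom F_A` projects to `z`. -/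
theorem fitz_eq_top_of_not_mem_closure_convexHull
    [NormedAddCommGroup X] [NormedSpace ℝ X] [CompleteSpace X]
    (A : Set (X × (X →L[ℝ] ℝ))) (hA : IsMaxMonotoneOp A) (z : X)
    (hz : z ∉ closure (convexHull ℝ (opDom A))) :
    (∀ z' : X →L[ℝ] ℝ, fitz A z z' = ⊤) ∧ z ∉ Prod.fst '' fitzDom A :=
  fitz_eq_top_of_not_mem_closure_convexHull_general A hA z hz
end
end
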